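/- arXiv:1912.09089 — 3 statements merged into one kernel-verified Lean document; each statement's English description precedes it below -/
import Mathlib

section
/- Let f be an (n(q-1) - mq)-eigenfunction of the Hamming graph H(n,q) for some m with 1 ≤ m ≤ n. Then for any pairwise distinct coordinate positions i_1, …, i_{m-1} in {1,…,n} and any alphabet symbols a_1, …, a_{m-1}, the function f either has at least two nonzero values on the face Γ_{i_1…i_{m-1}}^{a_1…a_{m-1}} or all values of f on this face are zero. -/
open scoped BigOperators

/-- The ball of radius 1 centered at `x` in a graph `G`. -/
def ball1 {V : Type*} (G : SimpleGraph V) (x : V) : Set V := {y | y = x ∨ G.Adj x y}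

/-- A perfect one-error-correcting code: the balls of radius 1 centered at the
vertices of `C` partition the vertex set. -/
def IsPerfectCode {V : Type*} (G : SimpleGraph V) (C : Set V) : Prop :=
  ∀ x : V, ∃! c, c ∈ C ∧ c ∈ ball1 G x

/-- A perfect bitrade: a pair of disjoint nonempty vertex sets such that every ball of
radius 1 contains exactly one vertex of each, or none of either. -/
def IsPerfectBitrade {V : Type*} (G : SimpleGraph V) (T0 T1 : Set V) : Prop :=
  Disjoint T0 T1 ∧ T0.Nonempty ∧ T1.Nonempty ∧
    ∀ x : V,
      ((∃! y, y ∈ T0 ∧ y ∈ ball1 G x) ∧ (∃! y, y ∈ T1 ∧ y ∈ ball1 G x)) ∨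
        (∀ y, y ∈ T0 ∪ T1 → y ∉ ball1 G x)

/-- A spherical bitrade: a pair of disjoint nonempty vertex sets such that every sphere of
radius 1 contains exactly one vertex of each, or none of either. -/
def IsSphericalBitrade {V : Type*} (G : SimpleGraph V) (S0 S1 : Set V) : Prop :=
  Disjoint S0 S1 ∧ S0.Nonempty ∧ S1.Nonempty ∧
    ∀ x : V,
      ((∃! y, y ∈ S0 ∧ G.Adj x y) ∧ (∃! y, y ∈ S1 ∧ G.Adj x y)) ∨
        (∀ y, y ∈ S0 ∪ S1 → ¬ G.Adj x y)

/-- The Hamming graph `H(n,q)`: vertices are `n`-tuples over an alphabet of size `q`,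
adjacent iff they differ in exactly one coordinate. -/
def hammingGraph (n q : ℕ) : SimpleGraph (Fin n → Fin q) where
  Adj x y := hammingDist x y = 1
  symm := by constructor; intro x y h; rwa [hammingDist_comm]
  loopless := by constructor; intro x h; simp [hammingDist_self] at h

/-- `f` is a `μ`-eigenfunction of `G`: `f` is not identically zero and
`μ · f x = ∑_{y ∈ O(x)} f y` for every vertex `x`. -/
def IsEigenfun {V : Type*} (G : SimpleGraph V) (μ : ℝ) (f : V → ℝ) : Prop :=
  f ≠ 0 ∧ ∀ x : V, μ * f x = ∑ᶠ y ∈ G.neighborSet x, f y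

/-- The characteristic function of a set of vertices. -/
noncomputable def chi {V : Type*} (C : Set V) : V → ℝ := Set.indicator C 1

/-- The code `C` has minimum (graph) distance exactly `d`. -/
def HasMinDist {V : Type*} (G : SimpleGraph V) (C : Set V) (d : ℕ) : Prop :=
  (∀ x ∈ C, ∀ y ∈ C, x ≠ y → (d : ℕ∞) ≤ G.edist x y) ∧
    ∃ x ∈ C, ∃ y ∈ C, x ≠ y ∧ G.edist x y = d

/-- The code `C` of `n`-tuples has minimum Hamming distance exactly `d`. -/
def HasMinHDist {n q : ℕ} (C : Set (Fin n → Fin q)) (d : ℕ) : Prop :=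
  (∀ x ∈ C, ∀ y ∈ C, x ≠ y → d ≤ hammingDist x y) ∧
    ∃ x ∈ C, ∃ y ∈ C, x ≠ y ∧ hammingDist x y = d

/-- `G` is distance-regular with intersection numbers `p i j k`. -/
def IsDistRegular {V : Type*} (G : SimpleGraph V) (p : ℕ → ℕ → ℕ → ℕ) : Prop :=
  G.Connected ∧ ∀ (i j k : ℕ) (x y : V), G.edist x y = k →
    {z : V | G.edist x z = i ∧ G.edist z y = j}.ncard = p i j k

/-! Summing the eigenvalue equation over the faces with the `m - 1` given positions fixed, the face
sums `F b = ∑_{x ∈ Γ^b} f x` form a function on `H(m - 1, q)` with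
`∑_l ∑_c F (b[l ↦ c]) = -q F b`: each of the `n - m + 1` free coordinates contributes `q F b`,
while changing a fixed coordinate moves to a neighbouring face. So `F` would be an eigenfunction
of `H(m - 1, q)` with eigenvalue `-(m - 1) - q`, below the smallest eigenvalue `-(m - 1)`.
Concretely, each operator `F ↦ (b ↦ ∑_c F (b[l ↦ c]))` is `q` times an orthogonal projection, so
the left-hand side has nonnegative inner product with `F`, forcing `F = 0`. A function with zero
sum over a face cannot have exactly one nonzero value on it. -/

open Finset Function

section Update

variable {ι α M : Type*} [DecidableEq ι] [AddCommMonoid M]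

lemma hammingDist_eq_one_iff [Fintype ι] [DecidableEq α] {x y : ι → α} :
    hammingDist x y = 1 ↔ ∃ j c, c ≠ x j ∧ update x j c = y := by
  constructor
  · intro h
    obtain ⟨j, hj⟩ := card_eq_one.mp h
    have hdiff : ∀ k, x k ≠ y k ↔ k = j := fun k => by
      simpa using congrArg (k ∈ ·) hj
    refine ⟨j, y j, fun h => (hdiff j).2 rfl h.symm, funext fun k => ?_⟩
    by_cases hk : k = j
    · subst hk; simp
    · rw [update_of_ne hk]
      exact not_not.mp (mt (hdiff k).1 hk)
  · rintro ⟨j, c, hc, rfl⟩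
    rw [hammingDist, card_eq_one]
    refine ⟨j, ?_⟩
    ext k
    by_cases hk : k = j
    · subst hk; simp [hc.symm]
    · simp [hk]

lemma sum_sum_update_eq_sum_hammingDist_eq_one_add [Fintype ι] [Fintype α] [DecidableEq α]
    (g : (ι → α) → M) (x : ι → α) :
    ∑ j, ∑ c, g (update x j c) =
      ∑ y with hammingDist x y = 1, g y + Fintype.card ι • g x := by
  have hsplit : ∀ j, ∑ c, g (update x j c) = ∑ c ∈ univ.erase (x j), g (update x j c) + g x :=
    fun j => by rw [← sum_erase_add _ _ (mem_univ (x j)), update_eq_self]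
  simp only [hsplit, sum_add_distrib, sum_const, card_univ]
  congr 1
  rw [sum_sigma']
  refine sum_bij (fun p _ => update x p.1 p.2) ?_ ?_ ?_ (fun _ _ => rfl)
  · rintro ⟨j, c⟩ hp
    exact mem_filter.mpr ⟨mem_univ _, hammingDist_eq_one_iff.mpr
      ⟨j, c, (mem_erase.mp (mem_sigma.mp hp).2).1, rfl⟩⟩
  · rintro ⟨j, c⟩ hp ⟨j', c'⟩ hp' h
    have hc := (mem_erase.mp (mem_sigma.mp hp).2).1
    have hjj : j = j' := by
      by_contra hne
      have := congrFun h j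
      rw [update_self, update_of_ne hne] at this
      exact hc this
    subst hjj
    simpa using congrFun h j
  · intro y hy
    obtain ⟨j, c, hc, rfl⟩ := hammingDist_eq_one_iff.mp (mem_filter.mp hy).2
    exact ⟨⟨j, c⟩, by simpa using hc, rfl⟩

lemma sum_sum_update_of_update_mem_iff [Fintype α] {s : Finset (ι → α)} {j : ι}
    (hs : ∀ x c, update x j c ∈ s ↔ x ∈ s) (g : (ι → α) → M) :
    ∑ x ∈ s, ∑ c, g (update x j c) = Fintype.card α • ∑ x ∈ s, g x := by
  let σ : (ι → α) × α → (ι → α) × α := fun p => (update p.1 j p.2, p.1 j)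
  have hσ : ∀ p, σ (σ p) = p := fun ⟨x, c⟩ => by simp [σ]
  calc ∑ x ∈ s, ∑ c, g (update x j c)
      = ∑ p ∈ s ×ˢ univ, g (σ p).1 :=
        (sum_product' s univ fun x c => g (update x j c)).symm
    _ = ∑ p ∈ s ×ˢ univ, g p.1 :=
        sum_nbij' σ σ (fun p hp => by simpa [σ, hs] using hp)
          (fun p hp => by simpa [σ, hs] using hp) (fun p _ => hσ p) (fun p _ => hσ p)
          (fun _ _ => rfl)
    _ = Fintype.card α • ∑ x ∈ s, g x := by
        rw [sum_product, smul_sum]; simp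

end Update

lemma hammingGraph_finsum_neighborSet {M : Type*} [AddCommMonoid M] (n q : ℕ)
    (g : (Fin n → Fin q) → M) (x : Fin n → Fin q) :
    ∑ᶠ y ∈ (hammingGraph n q).neighborSet x, g y = ∑ y with hammingDist x y = 1, g y := by
  rw [← finsum_mem_coe_finset]
  congr
  ext y
  simp [hammingGraph]

section Face

variable {ι κ α : Type*} [Fintype ι] [DecidableEq ι] [Fintype κ] [Fintype α] [DecidableEq α]

def face (i : κ → ι) (b : κ → α) : Finset (ι → α) := {x | ∀ l, x (i l) = b l}

@[simp]
lemma mem_face {i : κ → ι} {b : κ → α} {x : ι → α} : x ∈ face i b ↔ ∀ l, x (i l) = b l := by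
  simp [face]

lemma sum_face_update_apply [DecidableEq κ] {M : Type*} [AddCommMonoid M] {i : κ → ι}
    (hi : Injective i) (g : (ι → α) → M) (b : κ → α) (l : κ) (c : α) :
    ∑ x ∈ face i b, g (update x (i l) c) = ∑ y ∈ face i (update b l c), g y := by
  refine sum_nbij' (update · (i l) c) (update · (i l) (b l)) ?_ ?_ ?_ ?_ (fun _ _ => rfl)
  · intro x hx
    rw [mem_face]
    intro l'
    rcases eq_or_ne l' l with rfl | hl
    · simp
    · simp [update_of_ne hl, update_of_ne (hi.ne hl), mem_face.mp hx l']
  · intro y hy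
    rw [mem_face]
    intro l'
    rcases eq_or_ne l' l with rfl | hl
    · simp
    · simpa [update_of_ne hl, update_of_ne (hi.ne hl)] using mem_face.mp hy l'
  · intro x hx
    rw [update_idem, ← mem_face.mp hx l, update_eq_self]
  · intro y hy
    simpa using (mem_face.mp hy l).symm

lemma sum_sum_update_sum_face [DecidableEq κ] {i : κ → ι} (hi : Injective i)
    {f : (ι → α) → ℝ} {θ : ℝ} (hf : ∀ x, ∑ j, ∑ c, f (update x j c) = θ * f x) (b : κ → α) :
    ∑ l, ∑ c, ∑ y ∈ face i (update b l c), f y =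
      (θ - (Fintype.card ι - Fintype.card κ) * Fintype.card α) * ∑ x ∈ face i b, f x := by
  set S := image i univ
  have hfixed : ∑ j ∈ S, ∑ x ∈ face i b, ∑ c, f (update x j c) =
      ∑ l, ∑ c, ∑ y ∈ face i (update b l c), f y := by
    rw [sum_image hi.injOn]
    refine sum_congr rfl fun l _ => ?_
    rw [sum_comm]
    exact sum_congr rfl fun c _ => sum_face_update_apply hi f b l c
  have hfree : ∀ j ∈ Sᶜ, ∑ x ∈ face i b, ∑ c, f (update x j c) =
      Fintype.card α • ∑ x ∈ face i b, f x := fun j hj => by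
    have hj : ∀ l, i l ≠ j := fun l h => mem_compl.mp hj (h ▸ mem_image_of_mem i (mem_univ l))
    exact sum_sum_update_of_update_mem_iff (fun x c => by
      simp only [mem_face]
      exact forall_congr' fun l => by rw [update_of_ne (hj l)]) f
  have hcard : (Sᶜ.card : ℝ) = Fintype.card ι - Fintype.card κ := by
    rw [card_compl, card_image_of_injective _ hi, card_univ,
      Nat.cast_sub (Fintype.card_le_of_injective i hi)]
  have hall : ∑ j, ∑ x ∈ face i b, ∑ c, f (update x j c) = θ * ∑ x ∈ face i b, f x := by
    rw [sum_comm, mul_sum]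
    exact sum_congr rfl fun x _ => hf x
  have htotal := sum_add_sum_compl S fun j => ∑ x ∈ face i b, ∑ c, f (update x j c)
  rw [hfixed, sum_congr rfl hfree, sum_const, hall, smul_smul, nsmul_eq_mul] at htotal
  push_cast [hcard] at htotal
  linarith

end Face

section Positivity

variable {κ α : Type*} [Fintype κ] [DecidableEq κ] [Fintype α] [Nonempty α]

lemma sum_mul_sum_sum_update_nonneg (F : (κ → α) → ℝ) :
    0 ≤ ∑ b, F b * ∑ l, ∑ c, F (update b l c) := by
  simp only [mul_sum (s := univ) (f := fun l => ∑ c, F (update _ l c))]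
  rw [sum_comm]
  refine sum_nonneg fun l _ => ?_
  set P : (κ → α) → ℝ := fun b => ∑ c, F (update b l c)
  have hP : ∀ b c, P (update b l c) = P b := fun b c => by simp [P]
  have hsq : (Fintype.card α : ℝ) * ∑ b, F b * P b = ∑ b, P b ^ 2 := by
    rw [← nsmul_eq_mul, ← sum_sum_update_of_update_mem_iff (j := l) (by simp)]
    refine sum_congr rfl fun b _ => ?_
    simp only [hP, ← sum_mul, sq]
    rfl
  exact (mul_nonneg_iff_of_pos_left (by exact_mod_cast Fintype.card_pos)).mp
    (hsq ▸ sum_nonneg fun b _ => sq_nonneg (P b))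

lemma eq_zero_of_sum_sum_update_eq_neg_mul {F : (κ → α) → ℝ} {t : ℝ} (ht : 0 < t)
    (hF : ∀ b, ∑ l, ∑ c, F (update b l c) = -t * F b) : F = 0 := by
  have hnonneg := sum_mul_sum_sum_update_nonneg F
  simp only [hF, mul_left_comm _ (-t), ← mul_sum, ← sq] at hnonneg
  have hzero : ∑ b, F b ^ 2 = 0 :=
    le_antisymm (by nlinarith) (sum_nonneg fun b _ => sq_nonneg (F b))
  funext b
  simpa using congrFun ((Fintype.sum_eq_zero_iff_of_nonneg fun b => sq_nonneg (F b)).mp hzero) b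

end Positivity

lemma Finset.exists_ne_ne_zero_of_sum_eq_zero {β M : Type*} [AddCommMonoid M] {s : Finset β}
    {f : β → M} (hs : ∑ x ∈ s, f x = 0) {x : β} (hx : x ∈ s) (hfx : f x ≠ 0) :
    ∃ y ∈ s, y ≠ x ∧ f y ≠ 0 := by
  by_contra! h
  exact hfx (by rwa [sum_eq_single_of_mem x hx fun y hy hyx => h y hy hyx] at hs)

/-- An `(n(q-1)-mq)`-eigenfunction of `H(n,q)` (with `1 ≤ m ≤ n`) either
vanishes identically on a face with `m-1` fixed positions, or has at least two nonzero
values on it. -/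
theorem statement1 (n q m : ℕ) (hm1 : 1 ≤ m) (hmn : m ≤ n)
    (f : (Fin n → Fin q) → ℝ)
    (hf : IsEigenfun (hammingGraph n q) ((n * (q - 1) : ℝ) - m * q) f)
    (i : Fin (m - 1) → Fin n) (hi : Function.Injective i) (a : Fin (m - 1) → Fin q) :
    (∀ x : Fin n → Fin q, (∀ l, x (i l) = a l) → f x = 0) ∨
      (∃ x y : Fin n → Fin q, x ≠ y ∧ (∀ l, x (i l) = a l) ∧ (∀ l, y (i l) = a l) ∧
        f x ≠ 0 ∧ f y ≠ 0) := by
  rcases Nat.eq_zero_or_pos q with rfl | hq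
  · exact Or.inl fun x _ => (x ⟨0, by omega⟩).elim0
  have : Nonempty (Fin q) := ⟨⟨0, hq⟩⟩
  have hvertex : ∀ x, ∑ j, ∑ c, f (update x j c) = (n * q - m * q : ℝ) * f x := fun x => by
    rw [sum_sum_update_eq_sum_hammingDist_eq_one_add, ← hammingGraph_finsum_neighborSet,
      ← hf.2 x]
    simp only [Fintype.card_fin, nsmul_eq_mul]
    ring
  have hfaces : (fun b => ∑ x ∈ face i b, f x) = 0 :=
    eq_zero_of_sum_sum_update_eq_neg_mul (t := q) (by positivity) fun b => by
      rw [sum_sum_update_sum_face hi hvertex]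
      simp only [Fintype.card_fin, Nat.cast_sub hm1, Nat.cast_one, neg_mul]
      ring
  by_cases hzero : ∀ x : Fin n → Fin q, (∀ l, x (i l) = a l) → f x = 0
  · exact Or.inl hzero
  push Not at hzero
  obtain ⟨x, hx, hfx⟩ := hzero
  obtain ⟨y, hy, hyx, hfy⟩ :=
    exists_ne_ne_zero_of_sum_eq_zero (congrFun hfaces a) (mem_face.mpr hx) hfx
  exact Or.inr ⟨x, y, hyx.symm, hx, mem_face.mp hy, hfx, hfy⟩
end

section
/- Let G be a distance-regular graph with intersection numbers satisfying p_{11}^1 ≠ 0 and p_{21}^2 ≠ 0, and let (S0, S1) be a spherical bitrade in G with S0 and S1 nonempty. Then d_{S0} = d_{S1} = 3. -/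
open scoped BigOperators

/-! Two vertices of `S0` never share a neighbour, since a sphere meets `S0` at most once.
When `p 1 1 1 ≠ 0` every edge lies in a triangle, so two vertices of `S0` are neither adjacent
nor at distance 2. Conversely, starting from `u ∈ S0`, a neighbour `x` of `u` has a neighbour
`w ∈ S1` with `d(u, w) = 2`; `p 2 1 2 ≠ 0` gives a neighbour `z` of `w` with `d(u, z) = 2`, and
the sphere of `z` contains some `v ∈ S0`, at distance at most 3, hence exactly 3, from `u`. -/

namespace IsDistRegular

variable {V : Type*} {G : SimpleGraph V} {p : ℕ → ℕ → ℕ → ℕ}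

lemma exists_edist_eq_of_ne_zero (hreg : IsDistRegular G p) {i j k : ℕ} (hp : p i j k ≠ 0)
    {x y : V} (hxy : G.edist x y = k) : ∃ z, G.edist x z = i ∧ G.edist z y = j :=
  Set.nonempty_of_ncard_ne_zero (hreg.2 i j k x y hxy ▸ hp)

lemma commonNeighbors_nonempty_of_adj (hreg : IsDistRegular G p) (h111 : p 1 1 1 ≠ 0)
    {x y : V} (hxy : G.Adj x y) : (G.commonNeighbors x y).Nonempty := by
  obtain ⟨z, hxz, hzy⟩ :=
    hreg.exists_edist_eq_of_ne_zero h111 (by exact_mod_cast G.edist_eq_one_iff_adj.mpr hxy)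
  have hxz : G.Adj x z := G.edist_eq_one_iff_adj.mp (by exact_mod_cast hxz)
  have hzy : G.Adj z y := G.edist_eq_one_iff_adj.mp (by exact_mod_cast hzy)
  exact ⟨z, G.mem_commonNeighbors.mpr ⟨hxz, hzy.symm⟩⟩

end IsDistRegular

namespace IsSphericalBitrade

variable {V : Type*} {G : SimpleGraph V} {A B : Set V}

lemma symm (hb : IsSphericalBitrade G A B) : IsSphericalBitrade G B A := by
  obtain ⟨hdisj, hA, hB, hsph⟩ := hb
  refine ⟨hdisj.symm, hB, hA, fun x => ?_⟩
  rcases hsph x with ⟨hxA, hxB⟩ | hx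
  · exact Or.inl ⟨hxB, hxA⟩
  · exact Or.inr fun y hy => hx y (Set.union_comm B A ▸ hy)

lemma exists_mem_right_adj (hb : IsSphericalBitrade G A B) {u x : V} (hu : u ∈ A)
    (hxu : G.Adj x u) : ∃ w ∈ B, G.Adj x w := by
  rcases hb.2.2.2 x with ⟨-, ⟨w, ⟨hw, hxw⟩, -⟩⟩ | hx
  · exact ⟨w, hw, hxw⟩
  · exact absurd hxu (hx u (Or.inl hu))

lemma commonNeighbors_eq_empty (hb : IsSphericalBitrade G A B) {u v : V} (hu : u ∈ A)
    (hv : v ∈ A) (huv : u ≠ v) : G.commonNeighbors u v = ∅ :=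
  Set.eq_empty_of_forall_notMem fun x ⟨hux, hvx⟩ => by
    rcases hb.2.2.2 x with ⟨⟨y, -, hy⟩, -⟩ | hx
    · exact huv ((hy u ⟨hu, hux.symm⟩).trans (hy v ⟨hv, hvx.symm⟩).symm)
    · exact hx u (Or.inl hu) hux.symm

variable {p : ℕ → ℕ → ℕ → ℕ}

lemma not_adj (hb : IsSphericalBitrade G A B) (hreg : IsDistRegular G p) (h111 : p 1 1 1 ≠ 0)
    {u v : V} (hu : u ∈ A) (hv : v ∈ A) : ¬ G.Adj u v := fun huv =>
  (hreg.commonNeighbors_nonempty_of_adj h111 huv).ne_empty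
    (hb.commonNeighbors_eq_empty hu hv huv.ne)

lemma three_le_edist (hb : IsSphericalBitrade G A B) (hreg : IsDistRegular G p)
    (h111 : p 1 1 1 ≠ 0) {u v : V} (hu : u ∈ A) (hv : v ∈ A) (huv : u ≠ v) :
    3 ≤ G.edist u v :=
  Order.add_one_le_of_lt <| SimpleGraph.two_lt_edist_iff.mpr
    ⟨huv, hb.not_adj hreg h111 hu hv, hb.commonNeighbors_eq_empty hu hv huv⟩

lemma exists_edist_eq_three (hb : IsSphericalBitrade G A B) (hreg : IsDistRegular G p)
    (h111 : p 1 1 1 ≠ 0) (h212 : p 2 1 2 ≠ 0) {u : V} (hu : u ∈ A) :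
    ∃ v ∈ A, u ≠ v ∧ G.edist u v = 3 := by
  have hdisj := hb.1
  obtain ⟨w₀, hw₀⟩ := hb.2.2.1
  have : Nontrivial V := ⟨⟨u, w₀, hdisj.ne_of_mem hu hw₀⟩⟩
  obtain ⟨x, hux⟩ := hreg.1.preconnected.exists_adj_of_nontrivial u
  obtain ⟨w, hw, hxw⟩ := hb.exists_mem_right_adj hu hux.symm
  have huw : G.edist u w = (2 : ℕ) := by
    refine SimpleGraph.edist_eq_two_iff.mpr
      ⟨hdisj.ne_of_mem hu hw, fun huw => ?_, x, hux, hxw.symm⟩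
    obtain ⟨v, hv, huv⟩ := hb.symm.exists_mem_right_adj hw huw
    exact hb.not_adj hreg h111 hu hv huv
  obtain ⟨z, huz, hzw⟩ := hreg.exists_edist_eq_of_ne_zero h212 huw
  have hzw : G.Adj z w := G.edist_eq_one_iff_adj.mp (by exact_mod_cast hzw)
  obtain ⟨v, hv, hzv⟩ := hb.symm.exists_mem_right_adj hw hzw
  have huv : u ≠ v := by
    rintro rfl
    simp [G.edist_eq_one_iff_adj.mpr hzv.symm] at huz
  refine ⟨v, hv, huv, le_antisymm ?_ (hb.three_le_edist hreg h111 hu hv huv)⟩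
  calc G.edist u v ≤ G.edist u z + G.edist z v := G.edist_triangle
    _ = 3 := by rw [huz, G.edist_eq_one_iff_adj.mpr hzv]; norm_num

lemma hasMinDist_left (hb : IsSphericalBitrade G A B) (hreg : IsDistRegular G p)
    (h111 : p 1 1 1 ≠ 0) (h212 : p 2 1 2 ≠ 0) : HasMinDist G A 3 := by
  obtain ⟨u, hu⟩ := hb.2.1
  obtain ⟨v, hv, huv, huv3⟩ := hb.exists_edist_eq_three hreg h111 h212 hu
  exact ⟨fun x hx y hy hxy => hb.three_le_edist hreg h111 hx hy hxy,
    u, hu, v, hv, huv, huv3⟩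

end IsSphericalBitrade

/-- In a distance-regular graph with `p_{11}^1 ≠ 0` and `p_{21}^2 ≠ 0`, both
parts of a spherical bitrade have minimum distance exactly 3. -/
theorem statement4 {V : Type*} (G : SimpleGraph V) (p : ℕ → ℕ → ℕ → ℕ)
    (hreg : IsDistRegular G p) (h111 : p 1 1 1 ≠ 0) (h212 : p 2 1 2 ≠ 0)
    (S0 S1 : Set V) (hbt : IsSphericalBitrade G S0 S1) :
    HasMinDist G S0 3 ∧ HasMinDist G S1 3 :=
  ⟨hbt.hasMinDist_left hreg h111 h212, hbt.symm.hasMinDist_left hreg h111 h212⟩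
end

section
/- Let q ≥ 3 be a prime power and identify the alphabet with the finite field F_q. Let M ⊆ F_q^q be a linear MDS code of length q with minimum distance 2, and let C0 and C1 be linear MDS codes of length q with minimum distance 3 such that C0, C1 ⊂ M and C0 ≠ C1. Then (C0 \ C1, C1 \ C0) is a spherical bitrade in the Hamming graph H(q, q) of volume q^{q−2} − q^{q−3}. -/
open scoped BigOperators

/-- The Hamming graph on `n`-tuples over the alphabet `F`. -/
def hammingGraphF (n : ℕ) (F : Type*) [Fintype F] [DecidableEq F] :
    SimpleGraph (Fin n → F) where
  Adj x y := hammingDist x y = 1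
  symm := by constructor; intro x y h; rwa [hammingDist_comm]
  loopless := by constructor; intro x h; simp [hammingDist_self] at h

/-- Minimum Hamming distance exactly `d`, for codes over an arbitrary alphabet. -/
def HasMinHDistF {n : ℕ} {F : Type*} [Fintype (Fin n)] [DecidableEq F]
    (C : Set (Fin n → F)) (d : ℕ) : Prop :=
  (∀ x ∈ C, ∀ y ∈ C, x ≠ y → d ≤ hammingDist x y) ∧
    ∃ x ∈ C, ∃ y ∈ C, x ≠ y ∧ hammingDist x y = d


/-!
`M` is a hyperplane `ker φ`, and each `Cₖ` is `ker φ ∩ ker ψₖ`. Minimum distance 2 of `M` means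
`φ eᵢ ≠ 0` for every unit vector `eᵢ`; minimum distance 3 of `Cₖ` means that the ratios
`ψₖ eᵢ / φ eᵢ` are pairwise distinct, so, there being `q` coordinates and `q` field elements, they
run through all of `F`. Hence a vector `x ∉ M` has exactly one neighbour `x + a eᵢ` in `Cₖ`: `i` is
forced by `ψₖ eᵢ / φ eᵢ = ψₖ x / φ x` and `a` by `φ (x + a eᵢ) = 0`; a vector of `M` has no
neighbour in `M` at all. If the neighbours of `x` in `C₀` and `C₁` coincide, `x` sees neither
`C₀ \ C₁` nor `C₁ \ C₀`, otherwise exactly one vertex of each. Finally `C₀ + C₁ = M`, so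
`C₀ ∩ C₁` has dimension `q - 3`.
-/

section Hamming

variable {ι G : Type*} [Fintype ι] [DecidableEq ι] [DecidableEq G]

theorem hammingNorm_single_le_one [Zero G] (i : ι) (a : G) :
    hammingNorm (Pi.single i a : ι → G) ≤ 1 := by
  refine (Finset.card_le_card fun k hk => ?_).trans (Finset.card_singleton i).le
  by_contra hki
  simp_all [Pi.single_eq_of_ne (Finset.notMem_singleton.1 hki)]

theorem hammingNorm_add_le [AddZeroClass G] (x y : ι → G) :
    hammingNorm (x + y) ≤ hammingNorm x + hammingNorm y := by
  refine (Finset.card_le_card fun k hk => ?_).trans (Finset.card_union_le _ _)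
  simp only [Finset.mem_union, Finset.mem_filter, Finset.mem_univ, true_and] at hk ⊢
  by_contra! h
  exact hk (by simp [h.1, h.2])

theorem hammingNorm_eq_one_iff [Zero G] {v : ι → G} :
    hammingNorm v = 1 ↔ ∃ i, ∃ a ≠ 0, v = Pi.single i a := by
  constructor
  · intro hv
    obtain ⟨i, hi⟩ := Finset.card_eq_one.1 hv
    have hsupp : ∀ k, v k ≠ 0 ↔ k = i := fun k => by
      rw [← Finset.mem_singleton, ← hi, Finset.mem_filter]
      simp
    refine ⟨i, v i, (hsupp i).2 rfl, funext fun k => ?_⟩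
    by_cases hk : k = i
    · subst hk; simp
    · rw [Pi.single_eq_of_ne hk]
      exact not_not.1 fun h => hk ((hsupp k).1 h)
  · rintro ⟨i, a, ha, rfl⟩
    refine le_antisymm (hammingNorm_single_le_one i a) ?_
    exact Nat.one_le_iff_ne_zero.2 (hammingNorm_ne_zero_iff.2 (by simpa using ha))

theorem hammingDist_eq_one_iff_s13 [AddGroup G] {x y : ι → G} :
    hammingDist x y = 1 ↔ ∃ i, ∃ a ≠ 0, y = x + Pi.single i a := by
  rw [hammingDist_eq_hammingNorm, hammingNorm_eq_one_iff]
  simp only [neg_add_eq_iff_eq_add]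

end Hamming

section LinearCodes

open Module LinearMap

theorem exists_eq_inf_ker_of_lt_of_finrank_le {K V : Type*} [Field K] [AddCommGroup V]
    [Module K V] [FiniteDimensional K V] {P N : Submodule K V} (hlt : P < N)
    (hrank : finrank K N ≤ finrank K P + 1) : ∃ φ : V →ₗ[K] K, P = N ⊓ ker φ := by
  obtain ⟨m, hmN, hmP⟩ := SetLike.exists_of_lt hlt
  obtain ⟨φ, hφm, hφP⟩ := Submodule.exists_dual_map_eq_bot_of_notMem hmP inferInstance
  have hle : P ≤ N ⊓ ker φ := le_inf hlt.le (le_ker_iff_map.2 hφP)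
  have hlt' : N ⊓ ker φ < N := inf_lt_left.2 fun h => hφm (h hmN)
  refine ⟨φ, Submodule.eq_of_le_of_finrank_le hle ?_⟩
  have := Submodule.finrank_lt_finrank_of_lt hlt'
  omega

theorem finrank_eq_of_natCard_eq_pow {K V : Type*} [Field K] [Finite K] [AddCommGroup V]
    [Module K V] [Module.Finite K V] {m : ℕ} (h : Nat.card V = Nat.card K ^ m) :
    finrank K V = m :=
  Nat.pow_right_injective Finite.one_lt_card (Module.natCard_eq_pow_finrank.symm.trans h)

theorem exists_eq_ker_of_finrank_add_one_eq {K V : Type*} [Field K] [AddCommGroup V]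
    [Module K V] [FiniteDimensional K V] {M : Submodule K V}
    (hrank : finrank K M + 1 = finrank K V) : ∃ φ : V →ₗ[K] K, M = ker φ := by
  have hlt : M < ⊤ := lt_top_iff_ne_top.2 fun h => by
    rw [h, finrank_top] at hrank
    omega
  obtain ⟨φ, hφ⟩ := exists_eq_inf_ker_of_lt_of_finrank_le hlt (by rw [finrank_top]; omega)
  exact ⟨φ, hφ.trans (top_inf_eq _)⟩

theorem finrank_inf_add_two_eq {K V : Type*} [Field K] [AddCommGroup V] [Module K V]
    [FiniteDimensional K V] {C₀ C₁ M : Submodule K V} (h₀ : C₀ ≤ M) (h₁ : C₁ ≤ M)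
    (hrank₀ : finrank K C₀ + 1 = finrank K M) (hrank₁ : finrank K C₁ + 1 = finrank K M)
    (hne : C₀ ≠ C₁) : finrank K ↥(C₀ ⊓ C₁) + 2 = finrank K M := by
  have hlt : C₀ < C₀ ⊔ C₁ := left_lt_sup.2 fun h =>
    hne (Submodule.eq_of_le_of_finrank_eq h (by omega)).symm
  have := Submodule.finrank_lt_finrank_of_lt hlt
  have := Submodule.finrank_mono (sup_le h₀ h₁)
  have := Submodule.finrank_sup_add_finrank_inf_eq C₀ C₁
  omega

theorem LinearMap.apply_single_eq_mul {ι R : Type*} [DecidableEq ι] [CommSemiring R]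
    (φ : (ι → R) →ₗ[R] R) (i : ι) (a : R) : φ (Pi.single i a) = a * φ (Pi.single i 1) := by
  rw [← smul_eq_mul, ← map_smul, ← Pi.single_smul', smul_eq_mul, mul_one]

theorem Submodule.ncard_coe_sdiff {R V : Type*} [Semiring R] [AddCommMonoid V] [Module R V]
    [Finite V] (C₀ C₁ : Submodule R V) :
    ((C₀ : Set V) \ C₁).ncard = Nat.card C₀ - Nat.card ↥(C₀ ⊓ C₁) := by
  rw [← Set.sdiff_self_inter, Set.ncard_sdiff Set.inter_subset_left, ← Submodule.coe_inf,
    ← Nat.card_coe_set_eq, ← Nat.card_coe_set_eq, SetLike.coe_sort_coe, SetLike.coe_sort_coe]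

variable {ι F : Type*} [DecidableEq ι] [Field F]

theorem add_single_mem_inf_ker_iff (φ ψ : (ι → F) →ₗ[F] F) {x : ι → F} (hx : φ x ≠ 0)
    {i : ι} (hi : φ (Pi.single i 1) ≠ 0) (a : F) :
    x + Pi.single i a ∈ ker φ ⊓ ker ψ ↔
      a = -(φ x / φ (Pi.single i 1)) ∧ ψ (Pi.single i 1) / φ (Pi.single i 1) = ψ x / φ x := by
  rw [Submodule.mem_inf, mem_ker, mem_ker, map_add, map_add, apply_single_eq_mul φ i a,
    apply_single_eq_mul ψ i a]
  constructor
  · rintro ⟨h₁, h₂⟩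
    constructor
    · field_simp
      linear_combination h₁
    · field_simp
      linear_combination ψ (Pi.single i 1) * h₁ - φ (Pi.single i 1) * h₂
  · rintro ⟨rfl, hr⟩
    field_simp at hr ⊢
    constructor
    · ring
    · linear_combination -hr

variable [Fintype ι] [DecidableEq F]

theorem apply_single_ne_zero (φ : (ι → F) →ₗ[F] F)
    (hdist : ∀ x ∈ ker φ, ∀ y ∈ ker φ, x ≠ y → 2 ≤ hammingDist x y) (i : ι) :
    φ (Pi.single i 1) ≠ 0 := by
  intro h
  have h2 := hdist 0 (zero_mem _) _ h (Pi.single_ne_zero_iff.2 one_ne_zero).symm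
  have h1 : hammingDist 0 (Pi.single i (1 : F)) = 1 :=
    hammingDist_eq_one_iff_s13.2 ⟨i, 1, one_ne_zero, (zero_add _).symm⟩
  omega

theorem injective_div_apply_single (φ ψ : (ι → F) →ₗ[F] F)
    (hφ : ∀ i, φ (Pi.single i 1) ≠ 0)
    (hdist : ∀ x ∈ ker φ ⊓ ker ψ, ∀ y ∈ ker φ ⊓ ker ψ, x ≠ y → 3 ≤ hammingDist x y) :
    Function.Injective fun i => ψ (Pi.single i 1) / φ (Pi.single i 1) := by
  intro i j hij
  by_contra hne
  rw [div_eq_div_iff (hφ i) (hφ j)] at hij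
  set v : ι → F := Pi.single i (φ (Pi.single j 1)) + Pi.single j (-φ (Pi.single i 1))
  have hv : v ∈ ker φ ⊓ ker ψ := by
    rw [Submodule.mem_inf, mem_ker, mem_ker, map_add, map_add, apply_single_eq_mul φ i,
      apply_single_eq_mul φ j (-_), apply_single_eq_mul ψ i, apply_single_eq_mul ψ j (-_)]
    exact ⟨by ring, by linear_combination hij⟩
  have hv0 : v ≠ 0 := fun h => hφ j <| by
    simpa [v, Pi.single_apply, hne] using congrFun h i
  have hweight : hammingNorm v ≤ 2 :=
    (hammingNorm_add_le _ _).trans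
      (add_le_add (hammingNorm_single_le_one _ _) (hammingNorm_single_le_one _ _))
  have := hdist v hv 0 (zero_mem _) hv0
  rw [hammingDist_zero_right] at this
  omega

theorem existsUnique_hammingDist_eq_one_mem_inf_ker [Fintype F] (φ ψ : (ι → F) →ₗ[F] F)
    (hφ : ∀ i, φ (Pi.single i 1) ≠ 0)
    (hdist : ∀ x ∈ ker φ ⊓ ker ψ, ∀ y ∈ ker φ ⊓ ker ψ, x ≠ y → 3 ≤ hammingDist x y)
    (hcard : Fintype.card F = Fintype.card ι) {x : ι → F} (hx : φ x ≠ 0) :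
    ∃! c, c ∈ ker φ ⊓ ker ψ ∧ hammingDist x c = 1 := by
  have hr := injective_div_apply_single φ ψ hφ hdist
  obtain ⟨i₀, hi₀⟩ :=
    ((Fintype.bijective_iff_injective_and_card _).2 ⟨hr, hcard.symm⟩).2 (ψ x / φ x)
  refine ⟨x + Pi.single i₀ (-(φ x / φ (Pi.single i₀ 1))),
    ⟨(add_single_mem_inf_ker_iff φ ψ hx (hφ i₀) _).2 ⟨rfl, hi₀⟩,
      hammingDist_eq_one_iff_s13.2 ⟨i₀, _, neg_ne_zero.2 (div_ne_zero hx (hφ i₀)), rfl⟩⟩, ?_⟩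
  rintro c ⟨hc, hxc⟩
  obtain ⟨i, a, -, rfl⟩ := hammingDist_eq_one_iff_s13.1 hxc
  obtain ⟨rfl, hi⟩ := (add_single_mem_inf_ker_iff φ ψ hx (hφ i) a).1 hc
  obtain rfl := hr (hi.trans hi₀.symm)
  rfl

end LinearCodes

theorem isSphericalBitrade_sdiff {V : Type*} (G : SimpleGraph V) {C₀ C₁ : Set V}
    (h₀₁ : ¬C₀ ⊆ C₁) (h₁₀ : ¬C₁ ⊆ C₀)
    (h : ∀ x, ((∃! y, y ∈ C₀ ∧ G.Adj x y) ∧ (∃! y, y ∈ C₁ ∧ G.Adj x y)) ∨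
      ∀ y ∈ C₀ ∪ C₁, ¬G.Adj x y) :
    IsSphericalBitrade G (C₀ \ C₁) (C₁ \ C₀) := by
  refine ⟨disjoint_sdiff_sdiff, Set.sdiff_nonempty.2 h₀₁, Set.sdiff_nonempty.2 h₁₀, fun x => ?_⟩
  rcases h x with ⟨⟨y₀, ⟨hy₀, hxy₀⟩, hu₀⟩, ⟨y₁, ⟨hy₁, hxy₁⟩, hu₁⟩⟩ | hnone
  · by_cases hy₀₁ : y₀ ∈ C₁
    · have hy₀₁' : y₀ = y₁ := hu₁ y₀ ⟨hy₀₁, hxy₀⟩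
      refine Or.inr fun y hy hxy => ?_
      rcases hy with ⟨hy0, hny1⟩ | ⟨hy1, hny0⟩
      · exact hny1 (hu₀ y ⟨hy0, hxy⟩ ▸ hy₀₁)
      · exact hny0 ((hu₁ y ⟨hy1, hxy⟩).trans hy₀₁'.symm ▸ hy₀)
    · have hy₁₀ : y₁ ∉ C₀ := fun h => hy₀₁ (hu₀ y₁ ⟨h, hxy₁⟩ ▸ hy₁)
      exact Or.inl ⟨⟨y₀, ⟨⟨hy₀, hy₀₁⟩, hxy₀⟩, fun y hy => hu₀ y ⟨hy.1.1, hy.2⟩⟩,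
        ⟨y₁, ⟨⟨hy₁, hy₁₀⟩, hxy₁⟩, fun y hy => hu₁ y ⟨hy.1.1, hy.2⟩⟩⟩
  · exact Or.inr fun y hy => hnone y (hy.imp And.left And.left)

theorem statement13_general (q : ℕ)
    (F : Type) [Field F] [Fintype F] [DecidableEq F] (hcard : Fintype.card F = q)
    (M C0 C1 : Submodule F (Fin q → F))
    (hMmds : Nat.card M = q ^ (q - 1)) (hMdist : HasMinHDistF (M : Set (Fin q → F)) 2)
    (hC0mds : Nat.card C0 = q ^ (q - 2)) (hC0dist : HasMinHDistF (C0 : Set (Fin q → F)) 3)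
    (hC1mds : Nat.card C1 = q ^ (q - 2)) (hC1dist : HasMinHDistF (C1 : Set (Fin q → F)) 3)
    (hC0M : C0 < M) (hC1M : C1 < M) (hne : C0 ≠ C1) :
    IsSphericalBitrade (hammingGraphF q F)
      ((C0 : Set (Fin q → F)) \ (C1 : Set (Fin q → F)))
      ((C1 : Set (Fin q → F)) \ (C0 : Set (Fin q → F))) ∧
    ((C0 : Set (Fin q → F)) \ (C1 : Set (Fin q → F))).ncard =
      q ^ (q - 2) - q ^ (q - 3) := by
  have hF : Nat.card F = q := Nat.card_eq_fintype_card.trans hcard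
  have hq : 1 < q := hcard ▸ Fintype.one_lt_card
  have hrankM : Module.finrank F M = q - 1 := finrank_eq_of_natCard_eq_pow (hF ▸ hMmds)
  have hrank₀ : Module.finrank F C0 = q - 2 := finrank_eq_of_natCard_eq_pow (hF ▸ hC0mds)
  have hrank₁ : Module.finrank F C1 = q - 2 := finrank_eq_of_natCard_eq_pow (hF ▸ hC1mds)
  have hrankInf := finrank_inf_add_two_eq hC0M.le hC1M.le (by omega) (by omega) hne
  obtain ⟨φ, rfl⟩ := exists_eq_ker_of_finrank_add_one_eq (K := F) (M := M)
    (by rw [Module.finrank_fin_fun]; omega)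
  obtain ⟨ψ₀, rfl⟩ := exists_eq_inf_ker_of_lt_of_finrank_le hC0M (by omega)
  obtain ⟨ψ₁, rfl⟩ := exists_eq_inf_ker_of_lt_of_finrank_le hC1M (by omega)
  have hφ := apply_single_ne_zero φ hMdist.1
  have hcardq : Fintype.card F = Fintype.card (Fin q) := by rw [Fintype.card_fin, hcard]
  refine ⟨isSphericalBitrade_sdiff _ ?_ ?_ fun x => ?_, ?_⟩
  · exact fun h => hne (Submodule.eq_of_le_of_finrank_eq h (hrank₀.trans hrank₁.symm))
  · exact fun h => hne (Submodule.eq_of_le_of_finrank_eq h (hrank₁.trans hrank₀.symm)).symm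
  · by_cases hx : φ x = 0
    · refine Or.inr fun y hy hxy => ?_
      have hyM : y ∈ LinearMap.ker φ := hy.elim (fun h => hC0M.le h) fun h => hC1M.le h
      have h2 := hMdist.1 x hx y hyM hxy.ne
      have h1 : hammingDist x y = 1 := hxy
      omega
    · exact Or.inl ⟨existsUnique_hammingDist_eq_one_mem_inf_ker φ ψ₀ hφ hC0dist.1 hcardq hx,
        existsUnique_hammingDist_eq_one_mem_inf_ker φ ψ₁ hφ hC1dist.1 hcardq hx⟩
  · rw [Submodule.ncard_coe_sdiff, hC0mds, Module.natCard_eq_pow_finrank (K := F), hF]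
    congr 2
    omega

/-- Over a finite field `F` with `q ≥ 3` elements, if `M` is a linear MDS code
of length `q` with minimum distance 2 and `C0 ≠ C1` are linear MDS codes of length `q` with
minimum distance 3 contained (strictly) in `M`, then `(C0 \ C1, C1 \ C0)` is a spherical
bitrade in `H(q,q)` of volume `q^(q-2) - q^(q-3)`. -/
theorem statement13 (q : ℕ) (hq : 3 ≤ q)
    (F : Type) [Field F] [Fintype F] [DecidableEq F] (hcard : Fintype.card F = q)
    (M C0 C1 : Submodule F (Fin q → F))
    (hMmds : Nat.card M = q ^ (q - 1)) (hMdist : HasMinHDistF (M : Set (Fin q → F)) 2)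
    (hC0mds : Nat.card C0 = q ^ (q - 2)) (hC0dist : HasMinHDistF (C0 : Set (Fin q → F)) 3)
    (hC1mds : Nat.card C1 = q ^ (q - 2)) (hC1dist : HasMinHDistF (C1 : Set (Fin q → F)) 3)
    (hC0M : C0 < M) (hC1M : C1 < M) (hne : C0 ≠ C1) :
    IsSphericalBitrade (hammingGraphF q F)
      ((C0 : Set (Fin q → F)) \ (C1 : Set (Fin q → F)))
      ((C1 : Set (Fin q → F)) \ (C0 : Set (Fin q → F))) ∧
    ((C0 : Set (Fin q → F)) \ (C1 : Set (Fin q → F))).ncard =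
      q ^ (q - 2) - q ^ (q - 3) :=
  statement13_general q F hcard M C0 C1 hMmds hMdist hC0mds hC0dist hC1mds hC1dist hC0M hC1M hne
end
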